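/- Softmax Lipschitz-type bound: Let w_i = exp(s_i / τ) for scores s = (s_1,...,s_n) and τ > 0, normalized to Q(i) = w_i / Σ_j w_j. If two score vectors s and s' satisfy |s_i - s'_i| ≤ δ for all i, then the total variation distance between the induced distributions Q and Q' satisfies ||Q - Q'||_TV ≤ (e^{2δ/τ} - 1)/2 ≤ δ/τ · e^{2δ/τ}. -/

import Mathlib

open Finset

lemma softmax_ratio_aux {ι : Type*} [Fintype ι] [Nonempty ι]
    (τ δ : ℝ) (hτ : 0 < τ) (s s' : ι → ℝ)
    (hs : ∀ j, s j - s' j ≤ δ) (hs' : ∀ j, s' j - s j ≤ δ) (i : ι) :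
    Real.exp (s i / τ) / (∑ j, Real.exp (s j / τ)) ≤
      Real.exp (2 * δ / τ) * (Real.exp (s' i / τ) / (∑ j, Real.exp (s' j / τ))) := by
  have hS : (0:ℝ) < ∑ j, Real.exp (s j / τ) :=
    Finset.sum_pos (fun j _ => Real.exp_pos _) Finset.univ_nonempty
  have hS' : (0:ℝ) < ∑ j, Real.exp (s' j / τ) :=
    Finset.sum_pos (fun j _ => Real.exp_pos _) Finset.univ_nonempty
  have h1 : ∀ j, Real.exp (s j / τ) ≤ Real.exp (δ / τ) * Real.exp (s' j / τ) := by
    intro j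
    rw [← Real.exp_add]
    apply Real.exp_le_exp.mpr
    rw [← add_div]
    exact (div_le_div_iff_of_pos_right hτ).mpr (by linarith [hs j])
  have h2 : (∑ j, Real.exp (s' j / τ)) ≤ Real.exp (δ / τ) * ∑ j, Real.exp (s j / τ) := by
    rw [Finset.mul_sum]
    apply Finset.sum_le_sum
    intro j _
    rw [← Real.exp_add]
    apply Real.exp_le_exp.mpr
    rw [← add_div]
    exact (div_le_div_iff_of_pos_right hτ).mpr (by linarith [hs' j])
  rw [div_le_iff₀ hS]
  have key : Real.exp (s i / τ) * (∑ j, Real.exp (s' j / τ)) ≤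
      (Real.exp (δ / τ) * Real.exp (s' i / τ)) * (Real.exp (δ / τ) * ∑ j, Real.exp (s j / τ)) :=
    mul_le_mul (h1 i) h2 hS'.le (by positivity)
  have heq : Real.exp (2 * δ / τ) = Real.exp (δ / τ) * Real.exp (δ / τ) := by
    rw [← Real.exp_add]; ring_nf
  have hle : Real.exp (s i / τ) * (∑ j, Real.exp (s' j / τ)) ≤
      Real.exp (2 * δ / τ) * Real.exp (s' i / τ) * ∑ j, Real.exp (s j / τ) := by
    rw [heq]; nlinarith [key]
  calc Real.exp (s i / τ)
      = Real.exp (s i / τ) * (∑ j, Real.exp (s' j / τ)) / (∑ j, Real.exp (s' j / τ)) := by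
        field_simp
    _ ≤ Real.exp (2 * δ / τ) * Real.exp (s' i / τ) * (∑ j, Real.exp (s j / τ)) /
          (∑ j, Real.exp (s' j / τ)) := by
        exact div_le_div_of_nonneg_right hle hS'.le |>.trans_eq rfl
    _ = Real.exp (2 * δ / τ) * (Real.exp (s' i / τ) / (∑ j, Real.exp (s' j / τ))) *
          (∑ j, Real.exp (s j / τ)) := by ring

/-- Softmax Lipschitz-type bound: If two score vectors differ by
at most δ coordinatewise, the softmax distributions at temperature τ satisfy
‖Q - Q'‖_TV ≤ (e^{2δ/τ} - 1)/2 ≤ (δ/τ) e^{2δ/τ}. -/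
theorem softmax_tv_bound
    {ι : Type*} [Fintype ι] [Nonempty ι]
    (τ δ : ℝ) (hτ : 0 < τ) (hδ : 0 ≤ δ)
    (s s' : ι → ℝ) (hs : ∀ i, |s i - s' i| ≤ δ) :
    (1 / 2) * ∑ i, |Real.exp (s i / τ) / (∑ j, Real.exp (s j / τ)) -
        Real.exp (s' i / τ) / (∑ j, Real.exp (s' j / τ))| ≤
      (Real.exp (2 * δ / τ) - 1) / 2 ∧
    (Real.exp (2 * δ / τ) - 1) / 2 ≤ δ / τ * Real.exp (2 * δ / τ) := by
  have hs1 : ∀ j, s j - s' j ≤ δ := fun j => (abs_le.mp (hs j)).2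
  have hs2 : ∀ j, s' j - s j ≤ δ := fun j => by
    have := (abs_le.mp (hs j)).1; linarith
  have hS' : (0:ℝ) < ∑ j, Real.exp (s' j / τ) :=
    Finset.sum_pos (fun j _ => Real.exp_pos _) Finset.univ_nonempty
  set ε := 2 * δ / τ with hε
  have hεnn : 0 ≤ ε := by positivity
  have hexp1 : ε + 1 ≤ Real.exp ε := Real.add_one_le_exp ε
  have hexp2 : -ε + 1 ≤ Real.exp (-ε) := Real.add_one_le_exp (-ε)
  have hprod : Real.exp ε * Real.exp (-ε) = 1 := by
    rw [← Real.exp_add]; simp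
  constructor
  · have hpt : ∀ i, |Real.exp (s i / τ) / (∑ j, Real.exp (s j / τ)) -
        Real.exp (s' i / τ) / (∑ j, Real.exp (s' j / τ))| ≤
        (Real.exp ε - 1) * (Real.exp (s' i / τ) / (∑ j, Real.exp (s' j / τ))) := by
      intro i
      set a := Real.exp (s i / τ) / (∑ j, Real.exp (s j / τ)) with ha
      set b := Real.exp (s' i / τ) / (∑ j, Real.exp (s' j / τ)) with hb
      have hab : a ≤ Real.exp ε * b := softmax_ratio_aux τ δ hτ s s' hs1 hs2 i
      have hba : b ≤ Real.exp ε * a := softmax_ratio_aux τ δ hτ s' s hs2 hs1 i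
      have hb0 : 0 ≤ b := by positivity
      have ha0 : 0 ≤ a := by positivity
      rw [abs_sub_le_iff]
      constructor
      · nlinarith
      · -- b - a ≤ (exp ε - 1) * b : from exp(-ε) b ≤ a
        have h3 : Real.exp (-ε) * b ≤ a := by
          have := mul_le_mul_of_nonneg_left hba (Real.exp_pos (-ε)).le
          nlinarith
        have h4 : (2:ℝ) ≤ Real.exp ε + Real.exp (-ε) := by linarith
        nlinarith
    have hsum : ∑ i, |Real.exp (s i / τ) / (∑ j, Real.exp (s j / τ)) -
        Real.exp (s' i / τ) / (∑ j, Real.exp (s' j / τ))| ≤ Real.exp ε - 1 := by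
      calc ∑ i, |Real.exp (s i / τ) / (∑ j, Real.exp (s j / τ)) -
          Real.exp (s' i / τ) / (∑ j, Real.exp (s' j / τ))|
          ≤ ∑ i, (Real.exp ε - 1) * (Real.exp (s' i / τ) / (∑ j, Real.exp (s' j / τ))) :=
            Finset.sum_le_sum (fun i _ => hpt i)
        _ = (Real.exp ε - 1) * ∑ i, Real.exp (s' i / τ) / (∑ j, Real.exp (s' j / τ)) := by
            rw [Finset.mul_sum]
        _ = Real.exp ε - 1 := by
            rw [← Finset.sum_div, div_self hS'.ne']; ring
    linarith
  · have hhalf : δ / τ = ε / 2 := by rw [hε]; ring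
    nlinarith [Real.exp_pos ε, mul_le_mul_of_nonneg_left hexp2 (Real.exp_pos ε).le]
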